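/- Let ι be the inversion of ℝ³ with center c and radius R > 0, given by ι(x) = c + (R²/‖x − c‖²)·(x − c) for x ≠ c. Let Σ₁ and Σ₂ be spheres with centers o₁, o₂ and radii r₁, r₂ > 0 which meet at a point p, with c ∉ Σ₁, c ∉ Σ₂ and p ≠ c. Suppose Σ₁' and Σ₂' are spheres such that ι maps Σ₁ onto Σ₁' and Σ₂ onto Σ₂'. Then ι(p) ∈ Σ₁' ∩ Σ₂', and the angle between Σ₁' and Σ₂' at ι(p) equals the angle between Σ₁ and Σ₂ at p. -/

import Mathlib

open scoped RealInnerProductSpace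

noncomputable section

abbrev Pt := EuclideanSpace ℝ (Fin 3)

/-- Inversion of `ℝ³` with center `c` and radius `R`:
`ι x = c + (R² / ‖x - c‖²) • (x - c)` (junk value at `x = c`). -/
def invert (c : Pt) (R : ℝ) (x : Pt) : Pt := c + (R ^ 2 / ‖x - c‖ ^ 2) • (x - c)


lemma invert_mem_sphere (c o : Pt) (R r : ℝ)
    (hne : ‖o - c‖ ^ 2 - r ^ 2 ≠ 0)
    (x : Pt) (hx : x ∈ Metric.sphere o r) (hxc : x ≠ c) :
    invert c R x ∈ Metric.sphere (c + (R ^ 2 / (‖o - c‖ ^ 2 - r ^ 2)) • (o - c))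
      (|R ^ 2 / (‖o - c‖ ^ 2 - r ^ 2)| * r) := by
  have hx' : ‖x - o‖ = r := by simpa [dist_eq_norm] using hx
  have hr0 : 0 ≤ r := hx' ▸ norm_nonneg _
  set u : Pt := x - c with hu
  set v : Pt := o - c with hv
  have hs0 : ‖u‖ ≠ 0 := by simpa [hu, sub_eq_zero] using hxc
  set s : ℝ := ‖u‖ ^ 2 with hsdef
  have hs : s ≠ 0 := pow_ne_zero _ hs0
  set k : ℝ := R ^ 2 / (‖v‖ ^ 2 - r ^ 2) with hk
  have hdiff : invert c R x - (c + k • v) = (R ^ 2 / s) • u - k • v := by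
    simp [invert, hu, hv, hsdef]
  have hxo : x - o = u - v := by simp [hu, hv]
  have hrel : r ^ 2 = s - 2 * ⟪u, v⟫ + ‖v‖ ^ 2 := by
    rw [hsdef, ← hx', hxo, norm_sub_sq_real]
  have hnorm2 : ‖(R ^ 2 / s) • u - k • v‖ ^ 2
      = (R ^ 2 / s) ^ 2 * s - 2 * ((R ^ 2 / s) * k) * ⟪u, v⟫ + k ^ 2 * ‖v‖ ^ 2 := by
    rw [norm_sub_sq_real, norm_smul, norm_smul, real_inner_smul_left, real_inner_smul_right]
    simp only [mul_pow, Real.norm_eq_abs, sq_abs]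
    ring
  have ht : ⟪u, v⟫ = (s + ‖v‖ ^ 2 - r ^ 2) / 2 := by linarith
  have hval : ‖(R ^ 2 / s) • u - k • v‖ ^ 2 = (|k| * r) ^ 2 := by
    rw [hnorm2, ht, mul_pow, sq_abs, hk]
    field_simp
    ring
  have : dist (invert c R x) (c + k • v) = |k| * r := by
    rw [dist_eq_norm, hdiff]
    have := sq_eq_sq_iff_abs_eq_abs (‖(R ^ 2 / s) • u - k • v‖) (|k| * r) |>.mp hval
    rwa [abs_of_nonneg (norm_nonneg _), abs_of_nonneg (by positivity)] at this
  simpa [hv, hk, dist_eq_norm] using this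

lemma invert_invert (c : Pt) (R : ℝ) (hR : 0 < R) (y : Pt) (hy : y ≠ c) :
    invert c R (invert c R y) = y := by
  have h0 : ‖y - c‖ ≠ 0 := by simpa [sub_eq_zero] using hy
  have h1 : invert c R y - c = (R ^ 2 / ‖y - c‖ ^ 2) • (y - c) := by simp [invert]
  have h2 : ‖(R ^ 2 / ‖y - c‖ ^ 2) • (y - c)‖ ^ 2 = R ^ 4 / ‖y - c‖ ^ 2 := by
    rw [norm_smul, mul_pow, Real.norm_eq_abs, sq_abs]
    field_simp
  rw [invert, h1, h2, smul_smul]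
  have h3 : R ^ 2 / (R ^ 4 / ‖y - c‖ ^ 2) * (R ^ 2 / ‖y - c‖ ^ 2) = 1 := by
    field_simp
  rw [h3, one_smul]
  simp

lemma invert_ne_center (c : Pt) (R : ℝ) (hR : 0 < R) (y : Pt) (hy : y ≠ c) :
    invert c R y ≠ c := by
  have h0 : ‖y - c‖ ≠ 0 := by simpa [sub_eq_zero] using hy
  intro h
  have : (R ^ 2 / ‖y - c‖ ^ 2) • (y - c) = 0 := by
    have := sub_eq_zero.mpr h
    simpa [invert] using this
  rcases smul_eq_zero.mp this with h' | h'
  · have : R ^ 2 / ‖y - c‖ ^ 2 ≠ 0 := by positivity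
    exact this h'
  · exact hy (sub_eq_zero.mp h')

lemma sphere_inj (o o' : Pt) (r r' : ℝ) (hr : 0 < r)
    (h : Metric.sphere o r = Metric.sphere o' r') : o = o' ∧ r = r' := by
  have mem : ∀ e : Pt, ‖e‖ = 1 → ‖(o - o') + r • e‖ = r' := by
    intro e he
    have h1 : o + r • e ∈ Metric.sphere o r := by
      simp [dist_eq_norm, norm_smul, he, abs_of_pos hr]
    rw [h] at h1
    have h1' : dist (o + r • e) o' = r' := h1
    rw [dist_eq_norm] at h1'
    have heq : o + r • e - o' = (o - o') + r • e := by abel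
    rwa [heq] at h1'
  have ho : o = o' := by
    by_contra hne
    have ha : o - o' ≠ 0 := sub_ne_zero.mpr hne
    have hna : ‖o - o'‖ ≠ 0 := norm_ne_zero_iff.mpr ha
    obtain ⟨a, hadef⟩ : ∃ a : Pt, a = o - o' := ⟨_, rfl⟩
    rw [← hadef] at hna
    set e : Pt := ‖a‖⁻¹ • a with he
    have hen : ‖e‖ = 1 := by
      rw [he, norm_smul, Real.norm_eq_abs, abs_inv, abs_of_nonneg (norm_nonneg _),
        inv_mul_cancel₀ hna]
    have h1 := mem e hen
    have h2 := mem (-e) (by simpa using hen)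
    rw [← hadef] at h1 h2
    rw [smul_neg, ← sub_eq_add_neg] at h2
    have hsq : ‖a + r • e‖ ^ 2 = ‖a - r • e‖ ^ 2 := by rw [h1, h2]
    rw [norm_add_sq_real, norm_sub_sq_real] at hsq
    have hinner : ⟪a, r • e⟫ = 0 := by linarith
    rw [real_inner_smul_right, he, real_inner_smul_right, real_inner_self_eq_norm_sq] at hinner
    rcases mul_eq_zero.mp hinner with h' | h'
    · exact hr.ne' h'
    · rcases mul_eq_zero.mp h' with h'' | h''
      · exact hna (by simpa using h'')
      · exact (pow_ne_zero 2 hna) h''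
  have hr' : r = r' := by
    have := mem (EuclideanSpace.single (0 : Fin 3) (1:ℝ)) (by simp [EuclideanSpace.norm_single])
    rw [ho, sub_self, zero_add, norm_smul] at this
    simpa [abs_of_pos hr] using this
  exact ⟨ho, hr'⟩

lemma norm_sub_ne_of_not_mem (c o : Pt) (r : ℝ) (hr : 0 < r)
    (hc : c ∉ Metric.sphere o r) : ‖o - c‖ ≠ r := by
  intro h
  apply hc
  have : dist c o = r := by rw [dist_comm, ← h, dist_eq_norm]
  simpa [dist_eq_norm] using this

lemma sq_sub_ne (c o : Pt) (r : ℝ) (hr : 0 < r)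
    (hc : c ∉ Metric.sphere o r) : ‖o - c‖ ^ 2 - r ^ 2 ≠ 0 := by
  intro h
  have h2 : ‖o - c‖ ^ 2 = r ^ 2 := by linarith
  have := sq_eq_sq_iff_abs_eq_abs (‖o - c‖) r |>.mp h2
  rw [abs_of_nonneg (norm_nonneg _), abs_of_pos hr] at this
  exact norm_sub_ne_of_not_mem c o r hr hc this

lemma invert_image_sphere (c o : Pt) (R r : ℝ) (hR : 0 < R) (hr : 0 < r)
    (hc : c ∉ Metric.sphere o r) :
    invert c R '' (Metric.sphere o r)
      = Metric.sphere (c + (R ^ 2 / (‖o - c‖ ^ 2 - r ^ 2)) • (o - c))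
          (|R ^ 2 / (‖o - c‖ ^ 2 - r ^ 2)| * r) := by
  have hne : ‖o - c‖ ^ 2 - r ^ 2 ≠ 0 := sq_sub_ne c o r hr hc
  set k : ℝ := R ^ 2 / (‖o - c‖ ^ 2 - r ^ 2) with hk
  have hk0 : k ≠ 0 := div_ne_zero (pow_ne_zero _ hR.ne') hne
  ext y
  constructor
  · rintro ⟨x, hx, rfl⟩
    have hxc : x ≠ c := by rintro rfl; exact hc hx
    exact invert_mem_sphere c o R r hne x hx hxc
  · intro hy
    set o' : Pt := c + k • (o - c) with ho'
    set r' : ℝ := |k| * r with hr'def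
    have hr'pos : 0 < r' := mul_pos (abs_pos.mpr hk0) hr
    have hoc' : o' - c = k • (o - c) := by rw [ho']; abel
    have hnoc' : ‖o' - c‖ ^ 2 = k ^ 2 * ‖o - c‖ ^ 2 := by
      rw [hoc', norm_smul, mul_pow, Real.norm_eq_abs, sq_abs]
    have hne' : ‖o' - c‖ ^ 2 - r' ^ 2 ≠ 0 := by
      rw [hnoc', hr'def, mul_pow, sq_abs]
      intro h
      exact hne (by
        have : k ^ 2 * (‖o - c‖ ^ 2 - r ^ 2) = 0 := by ring_nf; ring_nf at h; linarith
        rcases mul_eq_zero.mp this with h' | h'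
        · exact absurd h' (pow_ne_zero _ hk0)
        · exact h')
    have hc' : c ∉ Metric.sphere o' r' := by
      intro h
      have h1 : ‖o' - c‖ = r' := by
        rw [← dist_eq_norm, dist_comm]
        simpa [dist_eq_norm] using h
      have h2 : ‖o' - c‖ ^ 2 - r' ^ 2 = 0 := by rw [h1]; ring
      exact hne' h2
    have hyc : y ≠ c := by rintro rfl; exact hc' hy
    have hmem := invert_mem_sphere c o' R r' hne' y hy hyc
    -- identify center and radius
    set k' : ℝ := R ^ 2 / (‖o' - c‖ ^ 2 - r' ^ 2) with hk'
    have hD : k * (‖o - c‖ ^ 2 - r ^ 2) = R ^ 2 := by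
      rw [hk]; field_simp
    have hDD : ‖o' - c‖ ^ 2 - r' ^ 2 = k * R ^ 2 := by
      rw [hnoc', hr'def, mul_pow, sq_abs]
      linear_combination k * hD
    have hkk' : k' * k = 1 := by
      rw [hk', hDD]
      field_simp
    have hcenter : c + k' • (o' - c) = o := by
      rw [hoc', smul_smul, hkk', one_smul]
      abel
    have hrad : |k'| * r' = r := by
      rw [hr'def, ← mul_assoc, ← abs_mul, hkk', abs_one, one_mul]
    rw [hcenter, hrad] at hmem
    exact ⟨invert c R y, hmem, invert_invert c R hR y hyc⟩

/-- The angle in `[0, π/2]` between the lines directed by `u` and `v`. -/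
def lineAngle (u v : Pt) : ℝ := Real.arccos (|⟪u, v⟫| / (‖u‖ * ‖v‖))

/-- The angle between two spheres (with centers `o₁`, `o₂`) at a common point `p`:
the angle in `[0, π/2]` between the lines through `p` with directions `o₁ - p` and
`o₂ - p`. -/
def sphereAngle (o₁ o₂ p : Pt) : ℝ := lineAngle (o₁ - p) (o₂ - p)

/-- Angles between spheres are preserved under inversion: if the inversion `ι` with
center `c` and radius `R > 0` maps the spheres `Σ₁ = sphere o₁ r₁` and
`Σ₂ = sphere o₂ r₂` (which meet at a point `p ≠ c`, neither passing through `c`) onto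
spheres `Σ₁' = sphere o₁' r₁'` and `Σ₂' = sphere o₂' r₂'`, then `ι p ∈ Σ₁' ∩ Σ₂'` and
the angle between `Σ₁'` and `Σ₂'` at `ι p` equals the angle between `Σ₁` and `Σ₂`
at `p`. -/
theorem inversion_preserves_angles_between_spheres
    (c : Pt) (R : ℝ) (hR : 0 < R)
    (o₁ o₂ : Pt) (r₁ r₂ : ℝ) (hr₁ : 0 < r₁) (hr₂ : 0 < r₂)
    (p : Pt) (hp₁ : p ∈ Metric.sphere o₁ r₁) (hp₂ : p ∈ Metric.sphere o₂ r₂)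
    (hc₁ : c ∉ Metric.sphere o₁ r₁) (hc₂ : c ∉ Metric.sphere o₂ r₂) (hpc : p ≠ c)
    (o₁' o₂' : Pt) (r₁' r₂' : ℝ) (hr₁' : 0 < r₁') (hr₂' : 0 < r₂')
    (h₁ : invert c R '' (Metric.sphere o₁ r₁) = Metric.sphere o₁' r₁')
    (h₂ : invert c R '' (Metric.sphere o₂ r₂) = Metric.sphere o₂' r₂') :
    invert c R p ∈ Metric.sphere o₁' r₁' ∩ Metric.sphere o₂' r₂' ∧
    sphereAngle o₁' o₂' (invert c R p) = sphereAngle o₁ o₂ p := by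
  have hq₁ : invert c R p ∈ Metric.sphere o₁' r₁' := h₁ ▸ Set.mem_image_of_mem _ hp₁
  have hq₂ : invert c R p ∈ Metric.sphere o₂' r₂' := h₂ ▸ Set.mem_image_of_mem _ hp₂
  refine ⟨⟨hq₁, hq₂⟩, ?_⟩
  have hne₁ : ‖o₁ - c‖ ^ 2 - r₁ ^ 2 ≠ 0 := sq_sub_ne c o₁ r₁ hr₁ hc₁
  have hne₂ : ‖o₂ - c‖ ^ 2 - r₂ ^ 2 ≠ 0 := sq_sub_ne c o₂ r₂ hr₂ hc₂
  set k₁ : ℝ := R ^ 2 / (‖o₁ - c‖ ^ 2 - r₁ ^ 2) with hk₁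
  set k₂ : ℝ := R ^ 2 / (‖o₂ - c‖ ^ 2 - r₂ ^ 2) with hk₂
  have hk₁0 : k₁ ≠ 0 := div_ne_zero (pow_ne_zero _ hR.ne') hne₁
  have hk₂0 : k₂ ≠ 0 := div_ne_zero (pow_ne_zero _ hR.ne') hne₂
  have heq₁ := sphere_inj _ o₁' _ r₁' (mul_pos (abs_pos.mpr hk₁0) hr₁)
    ((invert_image_sphere c o₁ R r₁ hR hr₁ hc₁).symm.trans h₁)
  have heq₂ := sphere_inj _ o₂' _ r₂' (mul_pos (abs_pos.mpr hk₂0) hr₂)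
    ((invert_image_sphere c o₂ R r₂ hR hr₂ hc₂).symm.trans h₂)
  have ho₁' : o₁' = c + k₁ • (o₁ - c) := heq₁.1.symm
  have ho₂' : o₂' = c + k₂ • (o₂ - c) := heq₂.1.symm
  set w : Pt := p - c with hw
  set s : ℝ := ‖w‖ ^ 2 with hs'
  have hw0 : ‖w‖ ≠ 0 := by simpa [hw, sub_eq_zero] using hpc
  have hs : s ≠ 0 := pow_ne_zero _ hw0
  set u₁ : Pt := o₁ - p with hu₁
  set u₂ : Pt := o₂ - p with hu₂
  set t₁ : ℝ := ⟪w, u₁⟫ with ht₁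
  set t₂ : ℝ := ⟪w, u₂⟫ with ht₂
  have hnu₁ : ‖u₁‖ = r₁ := by
    rw [hu₁, ← dist_eq_norm, dist_comm]; simpa [dist_eq_norm] using hp₁
  have hnu₂ : ‖u₂‖ = r₂ := by
    rw [hu₂, ← dist_eq_norm, dist_comm]; simpa [dist_eq_norm] using hp₂
  have ho₁c : o₁ - c = u₁ + w := by rw [hu₁, hw]; abel
  have ho₂c : o₂ - c = u₂ + w := by rw [hu₂, hw]; abel
  have hD₁ : ‖o₁ - c‖ ^ 2 - r₁ ^ 2 = s + 2 * t₁ := by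
    rw [ho₁c, norm_add_sq_real, hnu₁, hs', ht₁, real_inner_comm w u₁]
    ring
  have hD₂ : ‖o₂ - c‖ ^ 2 - r₂ ^ 2 = s + 2 * t₂ := by
    rw [ho₂c, norm_add_sq_real, hnu₂, hs', ht₂, real_inner_comm w u₂]
    ring
  have hq : invert c R p = c + (R ^ 2 / s) • w := by rw [invert]
  have hscal₁ : k₁ - R ^ 2 / s = -((2 * k₁ * t₁) / s) := by
    have hK : k₁ * (s + 2 * t₁) = R ^ 2 := by
      rw [hk₁, ← hD₁]; field_simp
    field_simp
    linear_combination hK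
  have hscal₂ : k₂ - R ^ 2 / s = -((2 * k₂ * t₂) / s) := by
    have hK : k₂ * (s + 2 * t₂) = R ^ 2 := by
      rw [hk₂, ← hD₂]; field_simp
    field_simp
    linear_combination hK
  have hv₁ : o₁' - invert c R p = k₁ • u₁ - ((2 * k₁ * t₁) / s) • w := by
    rw [ho₁', hq, ho₁c]
    have expand : (c + k₁ • (u₁ + w)) - (c + (R ^ 2 / s) • w)
        = k₁ • u₁ + (k₁ - R ^ 2 / s) • w := by module
    rw [expand, hscal₁]
    module
  have hv₂ : o₂' - invert c R p = k₂ • u₂ - ((2 * k₂ * t₂) / s) • w := by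
    rw [ho₂', hq, ho₂c]
    have expand : (c + k₂ • (u₂ + w)) - (c + (R ^ 2 / s) • w)
        = k₂ • u₂ + (k₂ - R ^ 2 / s) • w := by module
    rw [expand, hscal₂]
    module
  have hinner : ⟪o₁' - invert c R p, o₂' - invert c R p⟫ = k₁ * k₂ * ⟪u₁, u₂⟫ := by
    rw [hv₁, hv₂]
    simp only [inner_sub_left, inner_sub_right, real_inner_smul_left, real_inner_smul_right]
    rw [real_inner_comm w u₁, real_inner_self_eq_norm_sq, ht₁, ht₂, hs']
    field_simp
    ring
  have hnormsq : ∀ (k t : ℝ) (u : Pt), ⟪w, u⟫ = t →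
      ‖k • u - ((2 * k * t) / s) • w‖ ^ 2 = k ^ 2 * ‖u‖ ^ 2 := by
    intro k t u ht
    rw [norm_sub_sq_real]
    simp only [norm_smul, real_inner_smul_left, real_inner_smul_right, Real.norm_eq_abs,
      mul_pow, sq_abs]
    rw [real_inner_comm w u, ht, hs']
    field_simp
    ring
  have hnorm₁ : ‖o₁' - invert c R p‖ = |k₁| * r₁ := by
    have h2 : ‖o₁' - invert c R p‖ ^ 2 = (|k₁| * r₁) ^ 2 := by
      rw [hv₁, hnormsq k₁ t₁ u₁ ht₁.symm, hnu₁, mul_pow, sq_abs]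
    have := sq_eq_sq_iff_abs_eq_abs _ _ |>.mp h2
    rwa [abs_of_nonneg (norm_nonneg _), abs_of_nonneg (by positivity)] at this
  have hnorm₂ : ‖o₂' - invert c R p‖ = |k₂| * r₂ := by
    have h2 : ‖o₂' - invert c R p‖ ^ 2 = (|k₂| * r₂) ^ 2 := by
      rw [hv₂, hnormsq k₂ t₂ u₂ ht₂.symm, hnu₂, mul_pow, sq_abs]
    have := sq_eq_sq_iff_abs_eq_abs _ _ |>.mp h2
    rwa [abs_of_nonneg (norm_nonneg _), abs_of_nonneg (by positivity)] at this
  rw [sphereAngle, sphereAngle, lineAngle, lineAngle, hinner, hnorm₁, hnorm₂,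
    ← hu₁, ← hu₂, hnu₁, hnu₂]
  congr 1
  rw [abs_mul, abs_mul]
  have hk₁a : |k₁| ≠ 0 := abs_ne_zero.mpr hk₁0
  have hk₂a : |k₂| ≠ 0 := abs_ne_zero.mpr hk₂0
  field_simp

end
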